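/- arXiv:2307.04628 — 3 statements merged into one kernel-verified Lean document; each statement's English description precedes it below -/
import Mathlib

section
/- Let k ∈ ℕ, let H be a k-labeled graph, and let i, a, b ∈ Fin k with a ≠ b. Assume no operator occurrence on the left-hand side is useless (in particular H has at least two vertices of label i and η_{a,b} creates a new edge in H). Then θ_i(η_{a,b}(H)) = η_{a,b}(θ_i(H)) as k-labeled graphs, up to label-preserving isomorphism. -/
/-! ### `k`-labeled graphs and the basic operations on them -/

/-- A `k`-labeled graph: a simple graph together with a labeling of its vertices
by labels from `Fin k`. -/
structure LGraph (k : ℕ) where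
  V : Type
  G : SimpleGraph V
  lab : V → Fin k

namespace LGraph

variable {k : ℕ}

/-- The join operation `η_{a,b}`: add all edges between vertices of label `a`
and vertices of label `b`. -/
def join (a b : Fin k) (H : LGraph k) : LGraph k where
  V := H.V
  G :=
    { Adj := fun u v =>
        H.G.Adj u v ∨ (u ≠ v ∧ ((H.lab u = a ∧ H.lab v = b) ∨ (H.lab u = b ∧ H.lab v = a)))
      symm := by
        constructor
        intro u v h
        rcases h with h | ⟨hne, h⟩
        · exact Or.inl (H.G.symm.symm _ _ h)
        · refine Or.inr ⟨hne.symm, ?_⟩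
          rcases h with ⟨h1, h2⟩ | ⟨h1, h2⟩
          · exact Or.inr ⟨h2, h1⟩
          · exact Or.inl ⟨h2, h1⟩
      loopless := by
        constructor
        intro v h
        rcases h with h | ⟨hne, _⟩
        · exact H.G.loopless.irrefl v h
        · exact hne rfl }
  lab := H.lab

/-- The relabel operation `ρ_{a→b}`: every vertex of label `a` gets label `b` instead. -/
def relabel (a b : Fin k) (H : LGraph k) : LGraph k where
  V := H.V
  G := H.G
  lab := fun v => if H.lab v = a then b else H.lab v

/-- The fuse operation `θ_i`: replace all vertices of label `i` by a single new vertex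
(represented by `none`) of label `i` whose neighbourhood is the union of their
neighbourhoods. -/
def fuse (i : Fin k) (H : LGraph k) : LGraph k where
  V := Option {v : H.V // H.lab v ≠ i}
  G :=
    { Adj := fun x y =>
        match x, y with
        | some u, some v => H.G.Adj u.1 v.1
        | some u, none => ∃ w, H.lab w = i ∧ H.G.Adj u.1 w
        | none, some v => ∃ w, H.lab w = i ∧ H.G.Adj w v.1
        | none, none => False
      symm := by
        constructor
        rintro (_ | u) (_ | v) h
        · exact h
        · obtain ⟨w, hw, ha⟩ := h
          exact ⟨w, hw, ha.symm⟩
        · obtain ⟨w, hw, ha⟩ := h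
          exact ⟨w, hw, ha.symm⟩
        · exact H.G.symm.symm _ _ h
      loopless := by
        constructor
        rintro (_ | v) h
        · exact h
        · exact H.G.loopless.irrefl v.1 h }
  lab := fun x =>
    match x with
    | some u => H.lab u.1
    | none => i

/-- Disjoint union `H1 ⊕ H2` of two `k`-labeled graphs. -/
def union (H1 H2 : LGraph k) : LGraph k where
  V := H1.V ⊕ H2.V
  G := H1.G ⊕g H2.G
  lab := Sum.elim H1.lab H2.lab

/-- Label-preserving isomorphism of `k`-labeled graphs. -/
def LIso (H1 H2 : LGraph k) : Prop :=
  ∃ e : H1.G ≃g H2.G, ∀ v, H2.lab (e v) = H1.lab v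

/-- The occurrence of the join operator `η_{a,b}` applied to `H` is not useless,
i.e. it creates at least one new edge. -/
def joinUseful (a b : Fin k) (H : LGraph k) : Prop :=
  ∃ u v : H.V, u ≠ v ∧ H.lab u = a ∧ H.lab v = b ∧ ¬ H.G.Adj u v

/-- The occurrence of the fuse operator `θ_i` applied to `H` is not useless,
i.e. `H` has at least two vertices of label `i`. -/
def fuseUseful (i : Fin k) (H : LGraph k) : Prop :=
  ∃ u v : H.V, u ≠ v ∧ H.lab u = i ∧ H.lab v = i

/-- The occurrence of a relabel operator `ρ_{a→b}` applied to `H` is not useless,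
i.e. `H` has a vertex of label `a`. -/
def relabelUseful (a : Fin k) (H : LGraph k) : Prop :=
  ∃ v : H.V, H.lab v = a

/-- `relabelSeq i [a₁, …, a_q] H = ρ_{a₁→i}(⋯(ρ_{a_q→i}(H))⋯)`. -/
def relabelSeq (i : Fin k) : List (Fin k) → LGraph k → LGraph k
  | [], H => H
  | a :: as, H => relabel a i (relabelSeq i as H)

/-- None of the relabel operators in `relabelSeq i as H` is useless (this includes
that none of them has the form `ρ_{a→a}`). -/
def relabelSeqUseful (i : Fin k) : List (Fin k) → LGraph k → Prop
  | [], _ => True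
  | a :: as, H => relabelSeqUseful i as H ∧ a ≠ i ∧ relabelUseful a (relabelSeq i as H)

/-! Both sides have the same vertices (those of label `≠ i`, plus the fused vertex) and the
same labels, and agree on edges avoiding the fused vertex. Once some vertex of label `i` exists,
`η_{a,b}` applied before fusing links `u` to one of them exactly when `{lab u, i} = {a, b}`,
which is when `η_{a,b}` applied after fusing links `u` to the fused vertex. So the two
constructions give literally the same labeled graph. -/

variable {H : LGraph k} {a b i : Fin k}

theorem LIso.refl (H : LGraph k) : LIso H H :=
  ⟨SimpleGraph.Iso.refl, fun _ => rfl⟩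

theorem exists_lab_eq_join_adj_iff (hi : ∃ w, H.lab w = i) {u : H.V} (hu : H.lab u ≠ i) :
    (∃ w, H.lab w = i ∧ (join a b H).G.Adj u w) ↔
      (∃ w, H.lab w = i ∧ H.G.Adj u w) ∨ (H.lab u = a ∧ i = b ∨ H.lab u = b ∧ i = a) := by
  constructor
  · rintro ⟨w, hw, hadj | ⟨-, hlab⟩⟩
    · exact Or.inl ⟨w, hw, hadj⟩
    · exact Or.inr (hw ▸ hlab)
  · rintro (⟨w, hw, hadj⟩ | hlab)
    · exact ⟨w, hw, Or.inl hadj⟩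
    · obtain ⟨w, hw⟩ := hi
      exact ⟨w, hw, Or.inr ⟨fun h => hu (h ▸ hw), hw ▸ hlab⟩⟩

theorem fuse_join_eq (hi : ∃ w, H.lab w = i) :
    fuse i (join a b H) = join a b (fuse i H) := by
  unfold fuse join
  congr 1
  case e_lab => funext x; cases x <;> rfl
  ext x y
  rcases x with _ | u <;> rcases y with _ | v
  · simp
  · rw [SimpleGraph.adj_comm, SimpleGraph.adj_comm _ none]
    simp only [ne_eq, reduceCtorEq, not_false_eq_true, true_and]
    exact exists_lab_eq_join_adj_iff hi v.2
  · simp only [ne_eq, reduceCtorEq, not_false_eq_true, true_and]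
    exact exists_lab_eq_join_adj_iff hi u.2
  · simp [Subtype.ext_iff]

end LGraph

open LGraph

theorem fuse_join_comm_general {k : ℕ} (H : LGraph k) (i a b : Fin k)
    (hfuse : fuseUseful i (join a b H)) :
    LIso (fuse i (join a b H)) (join a b (fuse i H)) := by
  obtain ⟨x, -, -, hx, -⟩ := hfuse
  have hi : ∃ w, H.lab w = i := ⟨x, hx⟩
  rw [fuse_join_eq hi]
  exact LIso.refl _

/-- rule 1: `θ_i(η_{a,b}(H)) = η_{a,b}(θ_i(H))` provided that no
operator occurrence on the left-hand side is useless. -/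
theorem fuse_join_comm {k : ℕ} (H : LGraph k) (i a b : Fin k) (hab : a ≠ b)
    (hjoin : joinUseful a b H)
    (hfuse : fuseUseful i (join a b H)) :
    LIso (fuse i (join a b H)) (join a b (fuse i H)) :=
  fuse_join_comm_general H i a b hfuse
end

section
/- Let k, q ∈ ℕ, let H be a k-labeled graph, and let i, a, b, a_1, …, a_q ∈ Fin k with a ≠ b and a, b ∈ {a_1, …, a_q, i}. Assume no operator occurrence on the left-hand side is useless. Then θ_i(ρ_{a_1→i}(⋯ ρ_{a_q→i}(η_{a,b}(H)) ⋯)) = θ_i(ρ_{a_1→i}(⋯ ρ_{a_q→i}(H) ⋯)) as k-labeled graphs, up to label-preserving isomorphism. -/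
/-! After the relabelings every vertex of label `a` or `b` carries label `i`, so every edge
added by `η_{a,b}` has both ends among the vertices that `θ_i` fuses, and disappears. -/

namespace LGraph

variable {k : ℕ}

def relabelSeqLab (i : Fin k) : List (Fin k) → Fin k → Fin k
  | [], c => c
  | a :: as, c => if relabelSeqLab i as c = a then i else relabelSeqLab i as c

lemma relabelSeqLab_eq_self_or_eq (i : Fin k) (as : List (Fin k)) (c : Fin k) :
    relabelSeqLab i as c = c ∨ relabelSeqLab i as c = i := by
  induction as with
  | nil => exact Or.inl rfl
  | cons x as ih =>
    simp only [relabelSeqLab]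
    split
    · exact Or.inr rfl
    · exact ih

lemma relabelSeqLab_eq_of_mem {i c : Fin k} {as : List (Fin k)} (h : c ∈ as ∨ c = i) :
    relabelSeqLab i as c = i := by
  induction as with
  | nil =>
    rcases h with h | rfl
    · simp at h
    · rfl
  | cons x as ih =>
    simp only [relabelSeqLab]
    rcases h with h | rfl
    · rcases List.mem_cons.mp h with rfl | h
      · rcases relabelSeqLab_eq_self_or_eq i as c with h' | h' <;> simp [h']
      · simp [ih (Or.inl h)]
    · simp [ih (Or.inr rfl)]

lemma ne_of_relabelSeqLab_ne {i c d : Fin k} {as : List (Fin k)} (hd : d ∈ as ∨ d = i)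
    (hc : relabelSeqLab i as c ≠ i) : c ≠ d := by
  rintro rfl
  exact hc (relabelSeqLab_eq_of_mem hd)

lemma relabelSeq_eq (i : Fin k) (as : List (Fin k)) (H : LGraph k) :
    relabelSeq i as H = ⟨H.V, H.G, fun v => relabelSeqLab i as (H.lab v)⟩ := by
  induction as with
  | nil => rfl
  | cons a as ih => simp only [relabelSeq, ih]; rfl

lemma join_adj_iff_of_lab_ne {a b : Fin k} {H : LGraph k} {u v : H.V}
    (hua : H.lab u ≠ a) (hub : H.lab u ≠ b) : (join a b H).G.Adj u v ↔ H.G.Adj u v := by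
  refine ⟨?_, Or.inl⟩
  rintro (h | ⟨_, ⟨hu, _⟩ | ⟨hu, _⟩⟩)
  · exact h
  · exact absurd hu hua
  · exact absurd hu hub

lemma fuse_liso_of_adj_iff (i : Fin k) {V : Type} {G₁ G₂ : SimpleGraph V} {lab : V → Fin k}
    (h : ∀ u v, lab u ≠ i → (G₁.Adj u v ↔ G₂.Adj u v)) :
    LIso (fuse i ⟨V, G₁, lab⟩) (fuse i ⟨V, G₂, lab⟩) := by
  have h' : ∀ u v, lab v ≠ i → (G₁.Adj u v ↔ G₂.Adj u v) := fun u v hv => by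
    rw [SimpleGraph.adj_comm, h v u hv, SimpleGraph.adj_comm]
  refine ⟨⟨Equiv.refl _, ?_⟩, fun v => by cases v <;> rfl⟩
  rintro (_ | u) (_ | v)
  · exact Iff.rfl
  · exact exists_congr fun w => and_congr_right fun _ => (h' w v.1 v.2).symm
  · exact exists_congr fun w => and_congr_right fun _ => (h u.1 w u.2).symm
  · exact (h u.1 v.1 u.2).symm

end LGraph

open LGraph

theorem fuse_relabelSeq_join_absorb_general {k : ℕ} (H : LGraph k) (i a b : Fin k)
    (as : List (Fin k))
    (ha : a ∈ as ∨ a = i) (hb : b ∈ as ∨ b = i) :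
    LIso (fuse i (relabelSeq i as (join a b H)))
         (fuse i (relabelSeq i as H)) := by
  rw [relabelSeq_eq, relabelSeq_eq]
  exact fuse_liso_of_adj_iff i fun _ _ hu =>
    join_adj_iff_of_lab_ne (ne_of_relabelSeqLab_ne ha hu) (ne_of_relabelSeqLab_ne hb hu)

/-- rule 3: if `a, b ∈ {a₁, …, a_q, i}`, then
`θ_i(ρ_{a₁→i}(⋯ρ_{a_q→i}(η_{a,b}(H))⋯)) = θ_i(ρ_{a₁→i}(⋯ρ_{a_q→i}(H)⋯))` provided that no
operator occurrence on the left-hand side is useless. -/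
theorem fuse_relabelSeq_join_absorb {k : ℕ} (H : LGraph k) (i a b : Fin k)
    (as : List (Fin k)) (hab : a ≠ b)
    (ha : a ∈ as ∨ a = i) (hb : b ∈ as ∨ b = i)
    (hjoin : joinUseful a b H)
    (hseq : relabelSeqUseful i as (join a b H))
    (hfuse : fuseUseful i (relabelSeq i as (join a b H))) :
    LIso (fuse i (relabelSeq i as (join a b H)))
         (fuse i (relabelSeq i as H)) :=
  fuse_relabelSeq_join_absorb_general H i a b as ha hb
end

section
/- Let k, q ∈ ℕ, let H be a k-labeled graph, and let i, b, a_1, …, a_q ∈ Fin k with b ∉ {a_1, …, a_q, i}. Assume no operator occurrence on the left-hand side is useless. Then θ_i(ρ_{a_1→i}(⋯ ρ_{a_q→i}(θ_b(H)) ⋯)) = θ_b(θ_i(ρ_{a_1→i}(⋯ ρ_{a_q→i}(H) ⋯))) as k-labeled graphs, up to label-preserving isomorphism. -/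
/-!
Since `b ∉ as` and `b ≠ i`, none of the relabelings `ρ_{a→i}` creates or destroys label `b`, so
`θ_b` commutes with each of them up to isomorphism; and fusing two distinct labels commutes.
Hence `θ_i(ρ⋯ρ(θ_b H)) ≅ θ_i(θ_b(ρ⋯ρ H)) ≅ θ_b(θ_i(ρ⋯ρ H))`, using that `θ_i` and `ρ` respect
isomorphism.
-/

namespace LGraph

variable {k : ℕ}

section

variable {i a c : Fin k} {H : LGraph k}

@[simp] lemma fuse_adj_some_some {u v : {v : H.V // H.lab v ≠ i}} :
    (fuse i H).G.Adj (some u) (some v) ↔ H.G.Adj u v := Iff.rfl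

@[simp] lemma fuse_adj_some_none {u : {v : H.V // H.lab v ≠ i}} :
    (fuse i H).G.Adj (some u) none ↔ ∃ w, H.lab w = i ∧ H.G.Adj u w := Iff.rfl

@[simp] lemma fuse_adj_none_some {v : {v : H.V // H.lab v ≠ i}} :
    (fuse i H).G.Adj none (some v) ↔ ∃ w, H.lab w = i ∧ H.G.Adj w v := Iff.rfl

@[simp] lemma fuse_adj_none_none : ¬ (fuse i H).G.Adj none none := id

@[simp] lemma exists_fuse_vertex {p : (fuse i H).V → Prop} :
    (∃ x, p x) ↔ p none ∨ ∃ v, p (some v) := Option.exists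

@[simp] lemma fuse_lab_some {u : {v : H.V // H.lab v ≠ i}} :
    (fuse i H).lab (some u) = H.lab u := rfl

@[simp] lemma fuse_lab_none : (fuse i H).lab none = i := rfl

@[simp] lemma relabel_lab {v : H.V} :
    (relabel a c H).lab v = if H.lab v = a then c else H.lab v := rfl

end

namespace LIso

variable {H₁ H₂ H₃ : LGraph k}

theorem refl_s8 (H : LGraph k) : LIso H H := ⟨.refl, fun _ => rfl⟩

theorem of_equiv (e : H₁.V ≃ H₂.V) (hadj : ∀ u v, H₂.G.Adj (e u) (e v) ↔ H₁.G.Adj u v)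
    (hlab : ∀ v, H₂.lab (e v) = H₁.lab v) : LIso H₁ H₂ :=
  ⟨⟨e, hadj _ _⟩, hlab⟩

theorem trans : LIso H₁ H₂ → LIso H₂ H₃ → LIso H₁ H₃
  | ⟨e, he⟩, ⟨f, hf⟩ => ⟨e.trans f, fun v => (hf _).trans (he v)⟩

theorem relabel (a c : Fin k) : LIso H₁ H₂ → LIso (relabel a c H₁) (relabel a c H₂)
  | ⟨e, he⟩ => ⟨e, fun v => congrArg (fun x => if x = a then c else x) (he v)⟩

theorem fuse (i : Fin k) : LIso H₁ H₂ → LIso (fuse i H₁) (fuse i H₂)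
  | ⟨e, he⟩ => by
    refine of_equiv (Equiv.optionCongr (e.toEquiv.subtypeEquiv fun v => by rw [← he v]; rfl)) ?_ ?_
    · rintro (_ | u) (_ | v)
      · exact Iff.rfl
      · exact e.toEquiv.exists_congr (by simp [he, e.map_adj_iff]) |>.symm
      · exact e.toEquiv.exists_congr (by simp [he, e.map_adj_iff]) |>.symm
      · exact e.map_adj_iff
    · rintro (_ | u)
      · rfl
      · exact he u.1

end LIso

theorem relabel_lab_eq_iff {a b c : Fin k} {H : LGraph k} (hab : a ≠ b) (hcb : c ≠ b) {v : H.V} :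
    (relabel a c H).lab v = b ↔ H.lab v = b := by
  by_cases hv : H.lab v = a <;> simp [hv, hab, hcb]

theorem relabel_fuse_comm {a b c : Fin k} (H : LGraph k) (hab : a ≠ b) (hcb : c ≠ b) :
    LIso (relabel a c (fuse b H)) (fuse b (relabel a c H)) := by
  refine LIso.of_equiv (Equiv.optionCongr (Equiv.subtypeEquivRight fun v =>
    (relabel_lab_eq_iff hab hcb).not.symm)) ?_ ?_
  · rintro (_ | u) (_ | v)
    · exact Iff.rfl
    · exact exists_congr fun w => and_congr_left' (relabel_lab_eq_iff hab hcb)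
    · exact exists_congr fun w => and_congr_left' (relabel_lab_eq_iff hab hcb)
    · exact Iff.rfl
  · rintro (_ | u)
    · exact (if_neg hab.symm).symm
    · rfl

theorem relabelSeq_fuse_comm {b i : Fin k} (H : LGraph k) (as : List (Fin k)) (hbs : b ∉ as)
    (hbi : b ≠ i) : LIso (relabelSeq i as (fuse b H)) (fuse b (relabelSeq i as H)) := by
  induction as with
  | nil => exact LIso.refl_s8 _
  | cons a as ih =>
    rw [List.mem_cons, not_or] at hbs
    exact (ih hbs.2).relabel a i |>.trans (relabel_fuse_comm _ (Ne.symm hbs.1) hbi.symm)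

def fuseSwap {i b : Fin k} {H : LGraph k} (hib : i ≠ b) :
    (fuse i (fuse b H)).V → (fuse b (fuse i H)).V
  | none => some ⟨none, hib⟩
  | some ⟨none, _⟩ => none
  | some ⟨some v, h⟩ => some ⟨some ⟨v.1, h⟩, v.2⟩

theorem fuse_comm {i b : Fin k} (H : LGraph k) (hib : i ≠ b) :
    LIso (fuse i (fuse b H)) (fuse b (fuse i H)) := by
  refine LIso.of_equiv ⟨fuseSwap hib, fuseSwap hib.symm, ?_, ?_⟩ ?_ ?_
  · rintro (_ | _ | _) <;> rfl
  · rintro (_ | _ | _) <;> rfl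
  -- the two fused vertices are adjacent on either side iff some `i`-vertex of `H` is adjacent
  -- to some `b`-vertex, read in opposite orientations
  · rintro (_ | _ | u) (_ | _ | v) <;> simp [fuseSwap, hib, hib.symm]
    all_goals grind [SimpleGraph.adj_comm]
  · rintro (_ | _ | _) <;> rfl

end LGraph

open LGraph

theorem fuse_relabelSeq_fuse_comm_general {k : ℕ} (H : LGraph k) (i b : Fin k)
    (as : List (Fin k)) (hb : b ∉ as ∧ b ≠ i) :
    LIso (fuse i (relabelSeq i as (fuse b H)))
         (fuse b (fuse i (relabelSeq i as H))) :=
  ((relabelSeq_fuse_comm H as hb.1 hb.2).fuse i).trans (fuse_comm _ hb.2.symm)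

/-- rule 11: if `b ∉ {a₁, …, a_q, i}`, then
`θ_i(ρ_{a₁→i}(⋯ρ_{a_q→i}(θ_b(H))⋯)) = θ_b(θ_i(ρ_{a₁→i}(⋯ρ_{a_q→i}(H)⋯)))`
provided that no operator occurrence on the left-hand side is useless. -/
theorem fuse_relabelSeq_fuse_comm {k : ℕ} (H : LGraph k) (i b : Fin k)
    (as : List (Fin k)) (hb : b ∉ as ∧ b ≠ i)
    (hinner : fuseUseful b H)
    (hseq : relabelSeqUseful i as (fuse b H))
    (hfuse : fuseUseful i (relabelSeq i as (fuse b H))) :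
    LIso (fuse i (relabelSeq i as (fuse b H)))
         (fuse b (fuse i (relabelSeq i as H))) :=
  fuse_relabelSeq_fuse_comm_general H i b as hb
end
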